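/- arXiv:2502.00899 — 2 statements merged into one kernel-verified Lean document; each statement's English description precedes it below -/
import Mathlib

section
/- Let D be an n×n real diagonal matrix with strictly positive diagonal entries, W̃ a real n×m matrix, and k ≤ n·m. Let S be a set of k index pairs (i,j) such that the score S_{ij} = D_{ii}·|W̃_{ij}| satisfies S_{ij} ≥ S_{i'j'} for every (i,j) ∈ S and (i',j') ∉ S (i.e., S consists of the k entries of |D·W̃| of largest value). Define W_S by (W_S)_{ij} = W̃_{ij} if (i,j) ∈ S and 0 otherwise. Then W_S minimizes ‖D·(W̃ − W)‖_F over all real n×m matrices W having at most k nonzero entries; equivalently, W_S minimizes Tr((W̃ − W)ᵀ D² (W̃ − W)) over such W. -/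
open Matrix

/-- Frobenius norm of a real matrix. -/
noncomputable def frobNorm {n m : ℕ} (A : Matrix (Fin n) (Fin m) ℝ) : ℝ :=
  Real.sqrt (∑ i, ∑ j, (A i j) ^ 2)

lemma key_sum_le {α : Type*} [Fintype α] [DecidableEq α] (k : ℕ)
    (s : α → ℝ) (hs : ∀ q, 0 ≤ s q)
    (S T : Finset α) (hS : S.card = k) (hT : T.card ≤ k)
    (hmax : ∀ q ∈ S, ∀ q' ∉ S, s q' ≤ s q) :
    ∑ q ∈ Sᶜ, s q ≤ ∑ q ∈ Tᶜ, s q := by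
  have hTS : ∑ q ∈ T, s q ≤ ∑ q ∈ S, s q := by
    have hsplitT : ∑ q ∈ T, s q = ∑ q ∈ T ∩ S, s q + ∑ q ∈ T \ S, s q := by
      rw [Finset.sum_inter_add_sum_sdiff]
    have hsplitS : ∑ q ∈ S, s q = ∑ q ∈ S ∩ T, s q + ∑ q ∈ S \ T, s q := by
      rw [Finset.sum_inter_add_sum_sdiff]
    rw [hsplitT, hsplitS, Finset.inter_comm]
    gcongr _ + ?_
    -- ∑ q ∈ T \ S, s q ≤ ∑ q ∈ S \ T, s q
    have hcard : (T \ S).card ≤ (S \ T).card := by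
      have h1 : (T \ S).card + (T ∩ S).card = T.card := Finset.card_sdiff_add_card_inter T S
      have h2 : (S \ T).card + (S ∩ T).card = S.card := Finset.card_sdiff_add_card_inter S T
      rw [Finset.inter_comm] at h2
      omega
    rcases Finset.eq_empty_or_nonempty (T \ S) with he | hne
    · rw [he, Finset.sum_empty]
      exact Finset.sum_nonneg fun q _ => hs q
    · have hne' : (S \ T).Nonempty := Finset.card_pos.mp (lt_of_lt_of_le (Finset.card_pos.mpr hne) hcard)
      obtain ⟨q0, hq0, hq0eq⟩ := Finset.exists_mem_eq_inf' hne' s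
      have ha : ∀ q' ∈ T \ S, s q' ≤ (S \ T).inf' hne' s := by
        intro q' hq'
        rw [hq0eq]
        exact hmax q0 (Finset.mem_sdiff.mp hq0).1 q' (Finset.mem_sdiff.mp hq').2
      calc ∑ q' ∈ T \ S, s q' ≤ (T \ S).card • (S \ T).inf' hne' s :=
            Finset.sum_le_card_nsmul _ _ _ ha
        _ ≤ (S \ T).card • (S \ T).inf' hne' s := by
            have h0 : 0 ≤ (S \ T).inf' hne' s := by rw [hq0eq]; exact hs q0
            simpa [nsmul_eq_mul] using
              mul_le_mul_of_nonneg_right (by exact_mod_cast hcard : ((T \ S).card : ℝ) ≤ (S \ T).card) h0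
        _ ≤ ∑ q ∈ S \ T, s q := Finset.card_nsmul_le_sum _ _ _ fun q hq => Finset.inf'_le s hq
  have htot := Finset.sum_compl_add_sum S s
  have htot' := Finset.sum_compl_add_sum T s
  linarith

/-- **Wanda / hard-thresholding of `D·W̃` is optimal for (P1) under the diagonal
Hessian approximation (unstructured sparsity)**: if `D = diagonal d` with `d > 0`
and `S` consists of the `k` entries maximizing the score `d i * |W̃ i j|`, then the
hard-thresholded matrix `W_S` minimizes `‖D (W̃ - W)‖_F` — equivalently
`Tr((W̃-W)ᵀ D² (W̃-W))` — over all matrices `W` with at most `k` nonzero entries. -/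
theorem stmt5 {n m : ℕ} (k : ℕ) (hk : k ≤ n * m)
    (d : Fin n → ℝ) (hd : ∀ i, 0 < d i)
    (D : Matrix (Fin n) (Fin n) ℝ) (hD : D = Matrix.diagonal d)
    (Wt : Matrix (Fin n) (Fin m) ℝ)
    (S : Finset (Fin n × Fin m)) (hScard : S.card = k)
    (hmax : ∀ q ∈ S, ∀ q' ∉ S, d q'.1 * |Wt q'.1 q'.2| ≤ d q.1 * |Wt q.1 q.2|)
    (WS : Matrix (Fin n) (Fin m) ℝ)
    (hWS : ∀ i j, WS i j = if (i, j) ∈ S then Wt i j else 0) :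
    ∀ W : Matrix (Fin n) (Fin m) ℝ,
      (Finset.univ.filter fun q : Fin n × Fin m => W q.1 q.2 ≠ 0).card ≤ k →
      frobNorm (D * (Wt - WS)) ≤ frobNorm (D * (Wt - W)) ∧
      Matrix.trace ((Wt - WS)ᵀ * (D * D) * (Wt - WS)) ≤
        Matrix.trace ((Wt - W)ᵀ * (D * D) * (Wt - W)) := by
  intro W hW
  set s : Fin n × Fin m → ℝ := fun q => (d q.1 * |Wt q.1 q.2|) ^ 2 with hs_def
  have hs : ∀ q, 0 ≤ s q := fun q => sq_nonneg _
  set T : Finset (Fin n × Fin m) :=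
    Finset.univ.filter fun q : Fin n × Fin m => W q.1 q.2 ≠ 0 with hT_def
  have hmax' : ∀ q ∈ S, ∀ q' ∉ S, s q' ≤ s q := by
    intro q hq q' hq'
    have h1 := hmax q hq q' hq'
    have h2 : 0 ≤ d q'.1 * |Wt q'.1 q'.2| := mul_nonneg (hd q'.1).le (abs_nonneg _)
    exact pow_le_pow_left₀ h2 h1 2
  have hkey := key_sum_le k s hs S T hScard hW hmax'
  -- define the entrywise objective
  have f_eq : ∀ V : Matrix (Fin n) (Fin m) ℝ,
      ∑ i, ∑ j, (d i * (Wt i j - V i j)) ^ 2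
        = ∑ q : Fin n × Fin m, (d q.1 * (Wt q.1 q.2 - V q.1 q.2)) ^ 2 := by
    intro V; rw [Fintype.sum_prod_type]
  have hWS_sum : ∑ q : Fin n × Fin m, (d q.1 * (Wt q.1 q.2 - WS q.1 q.2)) ^ 2 = ∑ q ∈ Sᶜ, s q := by
    rw [← Finset.sum_filter_add_sum_filter_not Finset.univ (fun q : Fin n × Fin m => q ∈ S)]
    have h1 : ∑ q ∈ Finset.univ.filter (fun q : Fin n × Fin m => q ∈ S),
        (d q.1 * (Wt q.1 q.2 - WS q.1 q.2)) ^ 2 = 0 := by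
      apply Finset.sum_eq_zero
      intro q hq
      simp only [Finset.mem_filter] at hq
      rw [hWS]
      simp [hq.2]
    rw [h1, zero_add]
    have h2 : (Finset.univ.filter fun q : Fin n × Fin m => ¬ q ∈ S) = Sᶜ := by
      ext q; simp
    rw [h2]
    apply Finset.sum_congr rfl
    intro q hq
    have hq' : q ∉ S := by simpa using hq
    rw [hWS]
    simp only [hq', if_neg, hs_def]
    rw [if_neg (by simpa using hq')]
    rw [sub_zero, mul_pow, mul_pow, sq_abs]
  have hW_sum : ∑ q ∈ Tᶜ, s q ≤ ∑ q : Fin n × Fin m, (d q.1 * (Wt q.1 q.2 - W q.1 q.2)) ^ 2 := by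
    rw [← Finset.sum_compl_add_sum T (fun q : Fin n × Fin m => (d q.1 * (Wt q.1 q.2 - W q.1 q.2)) ^ 2)]
    have h1 : ∑ q ∈ Tᶜ, s q = ∑ q ∈ Tᶜ, (d q.1 * (Wt q.1 q.2 - W q.1 q.2)) ^ 2 := by
      apply Finset.sum_congr rfl
      intro q hq
      have hq0 : W q.1 q.2 = 0 := by
        have := Finset.mem_compl.mp hq
        simpa [hT_def] using this
      rw [hq0, sub_zero]
      simp only [hs_def, mul_pow, sq_abs]
    rw [h1]
    have := Finset.sum_nonneg (fun q (_ : q ∈ T) => sq_nonneg (d q.1 * (Wt q.1 q.2 - W q.1 q.2)))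
    linarith
  have hmain : ∑ i, ∑ j, (d i * (Wt i j - WS i j)) ^ 2 ≤ ∑ i, ∑ j, (d i * (Wt i j - W i j)) ^ 2 := by
    rw [f_eq, f_eq, hWS_sum]
    exact le_trans hkey hW_sum
  constructor
  · unfold frobNorm
    apply Real.sqrt_le_sqrt
    simpa [hD, Matrix.diagonal_mul, Matrix.sub_apply] using hmain
  · have htr : ∀ V : Matrix (Fin n) (Fin m) ℝ,
        Matrix.trace ((Wt - V)ᵀ * (D * D) * (Wt - V)) = ∑ i, ∑ j, (d i * (Wt i j - V i j)) ^ 2 := by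
      intro V
      rw [hD, Matrix.diagonal_mul_diagonal]
      simp only [Matrix.trace, Matrix.diag, Matrix.mul_apply, Matrix.transpose_apply,
        Matrix.diagonal_apply, Matrix.sub_apply]
      rw [Finset.sum_comm]
      apply Finset.sum_congr rfl
      intro i _
      apply Finset.sum_congr rfl
      intro j _
      simp only [mul_ite, mul_zero, Finset.sum_ite_eq', Finset.mem_univ, if_true]
      ring
    rw [htr, htr]
    exact hmain
end

section
/- Let D be an n×n real diagonal matrix with strictly positive diagonal entries, W̃ a real n×m matrix, and let the index pairs {1,…,n}×{1,…,m} be partitioned into disjoint blocks B₁,…,B_q with natural-number budgets b₁,…,b_q. For each block B_t, let S_t ⊆ B_t consist of min(b_t, |B_t|) index pairs maximizing the score D_{ii}·|W̃_{ij}| within B_t (i.e., D_{ii}|W̃_{ij}| ≥ D_{i'i'}|W̃_{i'j'}| for all (i,j) ∈ S_t and (i',j') ∈ B_t \ S_t), and set S = S₁ ∪ … ∪ S_q. Define W_S by (W_S)_{ij} = W̃_{ij} on S and 0 off S. Then W_S minimizes ‖D·(W̃ − W)‖_F over all matrices W whose support has at most b_t entries in each block B_t. -/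
lemma sum_dominate {α : Type*} [DecidableEq α] (s : α → ℝ) (hs : ∀ a, 0 ≤ s a)
    (A C : Finset α) (hcard : C.card ≤ A.card)
    (h : ∀ a ∈ A, ∀ c ∈ C, s c ≤ s a) : ∑ c ∈ C, s c ≤ ∑ a ∈ A, s a := by
  rcases A.eq_empty_or_nonempty with hA | hA
  · subst hA
    simp only [Finset.card_empty, Nat.le_zero, Finset.card_eq_zero] at hcard
    simp [hcard]
  · obtain ⟨a₀, ha₀A, ha₀⟩ := A.exists_min_image s hA
    calc ∑ c ∈ C, s c ≤ ∑ _c ∈ C, s a₀ :=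
          Finset.sum_le_sum (fun c hc => h a₀ ha₀A c hc)
      _ = (C.card : ℝ) * s a₀ := by rw [Finset.sum_const, nsmul_eq_mul]
      _ ≤ (A.card : ℝ) * s a₀ :=
          mul_le_mul_of_nonneg_right (by exact_mod_cast hcard) (hs a₀)
      _ = A.card • s a₀ := (nsmul_eq_mul _ _).symm
      _ ≤ ∑ a ∈ A, s a := Finset.card_nsmul_le_sum A s (s a₀) ha₀

/-- **Wanda / hard-thresholding of `D·W̃` is optimal for (P1) under the diagonal
Hessian approximation (block-wise / semi-structured N:M sparsity)**: given a
partition of the index set into blocks `B t` with budgets `b t`, keeping within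
each block the `min (b t) |B t|` entries maximizing the score `d i * |W̃ i j|`
minimizes `‖D (W̃ - W)‖_F` over all matrices `W` whose support has at most `b t`
entries in each block. -/
theorem stmt6 {n m q : ℕ}
    (d : Fin n → ℝ) (hd : ∀ i, 0 < d i)
    (D : Matrix (Fin n) (Fin n) ℝ) (hD : D = Matrix.diagonal d)
    (Wt : Matrix (Fin n) (Fin m) ℝ)
    (B : Fin q → Finset (Fin n × Fin m))
    (hdisj : ∀ s t : Fin q, s ≠ t → Disjoint (B s) (B t))
    (hcover : Finset.univ.biUnion B = (Finset.univ : Finset (Fin n × Fin m)))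
    (b : Fin q → ℕ)
    (St : Fin q → Finset (Fin n × Fin m))
    (hsub : ∀ t, St t ⊆ B t)
    (hcard : ∀ t, (St t).card = min (b t) (B t).card)
    (hmax : ∀ t, ∀ q1 ∈ St t, ∀ q2 ∈ B t \ St t,
      d q2.1 * |Wt q2.1 q2.2| ≤ d q1.1 * |Wt q1.1 q1.2|)
    (S : Finset (Fin n × Fin m)) (hS : S = Finset.univ.biUnion St)
    (WS : Matrix (Fin n) (Fin m) ℝ)
    (hWS : ∀ i j, WS i j = if (i, j) ∈ S then Wt i j else 0) :
    ∀ W : Matrix (Fin n) (Fin m) ℝ,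
      (∀ t, ((B t).filter fun q' => W q'.1 q'.2 ≠ 0).card ≤ b t) →
      frobNorm (D * (Wt - WS)) ≤ frobNorm (D * (Wt - W)) := by
  intro W hW
  unfold frobNorm
  apply Real.sqrt_le_sqrt
  -- rewrite both sides as sums over pairs
  have key : ∀ W' : Matrix (Fin n) (Fin m) ℝ,
      (∑ i, ∑ j, ((D * (Wt - W')) i j) ^ 2)
        = ∑ t, ∑ p ∈ B t, (d p.1 * (Wt p.1 p.2 - W' p.1 p.2)) ^ 2 := by
    intro W'
    have h1 : (∑ i, ∑ j, ((D * (Wt - W')) i j) ^ 2)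
        = ∑ p : Fin n × Fin m, (d p.1 * (Wt p.1 p.2 - W' p.1 p.2)) ^ 2 := by
      rw [Fintype.sum_prod_type]
      subst hD
      simp [Matrix.diagonal_mul, Matrix.sub_apply]
    rw [h1, ← hcover, Finset.sum_biUnion]
    intro s hs t ht hst
    exact hdisj s t hst
  rw [key WS, key W]
  apply Finset.sum_le_sum
  intro t _
  -- score function
  set sc : Fin n × Fin m → ℝ := fun p => (d p.1 * |Wt p.1 p.2|) ^ 2 with hsc
  have hsc_nonneg : ∀ p, 0 ≤ sc p := fun p => sq_nonneg _
  -- membership facts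
  have hmemS : ∀ p ∈ St t, p ∈ S := by
    intro p hp
    rw [hS, Finset.mem_biUnion]
    exact ⟨t, Finset.mem_univ t, hp⟩
  have hnotS : ∀ p ∈ B t \ St t, p ∉ S := by
    intro p hp hpS
    rw [hS, Finset.mem_biUnion] at hpS
    obtain ⟨t', _, hpt'⟩ := hpS
    rcases eq_or_ne t' t with rfl | hne
    · exact (Finset.mem_sdiff.mp hp).2 hpt'
    · exact (hdisj t' t hne).forall_ne_finset (hsub t' hpt')
        (Finset.mem_sdiff.mp hp).1 rfl
  -- LHS over block t
  have hL : (∑ p ∈ B t, (d p.1 * (Wt p.1 p.2 - WS p.1 p.2)) ^ 2)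
      = ∑ p ∈ B t \ St t, sc p := by
    rw [← Finset.sum_sdiff (hsub t)]
    have hz : ∀ p ∈ St t, (d p.1 * (Wt p.1 p.2 - WS p.1 p.2)) ^ 2 = 0 := by
      intro p hp
      rw [hWS p.1 p.2, if_pos (by simpa using hmemS p hp)]
      ring
    rw [Finset.sum_congr rfl hz, Finset.sum_const_zero, add_zero]
    apply Finset.sum_congr rfl
    intro p hp
    rw [hWS p.1 p.2, if_neg (by simpa using hnotS p hp)]
    rw [hsc]
    simp [sq_abs, mul_pow]
  rw [hL]
  -- RHS over block t: restrict to zeros of W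
  set T : Finset (Fin n × Fin m) := (B t).filter (fun p => W p.1 p.2 = 0) with hT
  have hTsum : (∑ p ∈ T, sc p) ≤ ∑ p ∈ B t, (d p.1 * (Wt p.1 p.2 - W p.1 p.2)) ^ 2 := by
    have : ∀ p ∈ T, sc p = (d p.1 * (Wt p.1 p.2 - W p.1 p.2)) ^ 2 := by
      intro p hp
      have hz := (Finset.mem_filter.mp hp).2
      rw [hsc, hz, sub_zero]
      simp [mul_pow, sq_abs]
    rw [Finset.sum_congr rfl this]
    exact Finset.sum_le_sum_of_subset_of_nonneg (Finset.filter_subset _ _)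
      (fun p _ _ => sq_nonneg _)
  refine le_trans ?_ hTsum
  -- main combinatorial step: ∑_{B t \ St t} sc ≤ ∑_T sc
  have hcardT : (B t \ St t).card ≤ T.card := by
    have h1 : (B t \ St t).card = (B t).card - min (b t) (B t).card := by
      rw [Finset.card_sdiff_of_subset (hsub t), hcard t]
    have h2 := Finset.card_filter_add_card_filter_not
      (s := B t) (p := fun p => W p.1 p.2 = 0)
    have h3 : ((B t).filter fun p => ¬ W p.1 p.2 = 0).card ≤ min (b t) (B t).card :=
      le_min (hW t) (Finset.card_filter_le _ _)
    have h4 : T.card = ((B t).filter fun p => W p.1 p.2 = 0).card := rfl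
    omega
  -- split sums
  have hsplit1 : (∑ p ∈ B t \ St t, sc p)
      = (∑ p ∈ (B t \ St t) ∩ T, sc p) + ∑ p ∈ (B t \ St t) \ T, sc p := by
    rw [Finset.sum_inter_add_sum_sdiff]
  have hsplit2 : (∑ p ∈ T, sc p)
      = (∑ p ∈ T ∩ (B t \ St t), sc p) + ∑ p ∈ T \ (B t \ St t), sc p := by
    rw [Finset.sum_inter_add_sum_sdiff]
  rw [hsplit1, hsplit2, Finset.inter_comm]
  apply add_le_add le_rfl
  -- dominate: elements of T \ (B t \ St t) are in St t, elements of (B t \ St t) \ T in B t \ St t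
  apply sum_dominate sc hsc_nonneg
  · -- card
    have e1 : ((B t \ St t) \ T).card + ((B t \ St t) ∩ T).card = (B t \ St t).card := by
      rw [Finset.card_sdiff_add_card_inter]
    have e2 : (T \ (B t \ St t)).card + (T ∩ (B t \ St t)).card = T.card := by
      rw [Finset.card_sdiff_add_card_inter]
    have e3 : ((B t \ St t) ∩ T).card = (T ∩ (B t \ St t)).card := by
      rw [Finset.inter_comm]
    omega
  · intro a ha c hc
    have haSt : a ∈ St t := by
      have h1 := (Finset.mem_sdiff.mp ha).1
      have h2 := (Finset.mem_sdiff.mp ha).2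
      have hBt := (Finset.mem_filter.mp h1).1
      by_contra hcon
      exact h2 (Finset.mem_sdiff.mpr ⟨hBt, hcon⟩)
    have hcB : c ∈ B t \ St t := (Finset.mem_sdiff.mp hc).1
    have := hmax t a haSt c hcB
    rw [hsc]
    have hnn : 0 ≤ d c.1 * |Wt c.1 c.2| :=
      mul_nonneg (le_of_lt (hd c.1)) (abs_nonneg _)
    exact pow_le_pow_left₀ hnn this 2
end
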